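/- arXiv:1204.6727 — 7 statements merged into one kernel-verified Lean document; each statement's English description precedes it below -/
import Mathlib

section
/- For a unimodal flow-density function Q as above with Q(0) = Q(k_jam) = 0 and Q > 0 on (0, k_jam), the ratio D(k)/S(k) is a strictly increasing function of k on (0, k_jam); hence the map k ↦ D(k)/S(k) is injective, so the density is uniquely determined by the demand-supply ratio. -/
/-- For a unimodal flow-density function `Q` with `Q 0 = Q k_jam = 0` and
`Q > 0` on `(0, k_jam)`, the demand-supply ratio `k ↦ D k / S k` is strictly increasing
on `(0, k_jam)`, hence injective there, so density is uniquely determined by the ratio. -/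
theorem demand_supply_ratio_strictMono_and_injective
    (Q : ℝ → ℝ) (k_c k_jam : ℝ)
    (hkc : k_c ∈ Set.Icc (0 : ℝ) k_jam)
    (hQcont : ContinuousOn Q (Set.Icc 0 k_jam))
    (hmono : StrictMonoOn Q (Set.Icc 0 k_c))
    (hanti : StrictAntiOn Q (Set.Icc k_c k_jam))
    (hQ0 : Q 0 = 0) (hQjam : Q k_jam = 0)
    (hQpos : ∀ k ∈ Set.Ioo (0 : ℝ) k_jam, 0 < Q k)
    (D S : ℝ → ℝ)
    (hD : ∀ k, D k = Q (min k k_c))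
    (hS : ∀ k, S k = Q (max k k_c)) :
    StrictMonoOn (fun k => D k / S k) (Set.Ioo 0 k_jam) ∧
      Set.InjOn (fun k => D k / S k) (Set.Ioo 0 k_jam) := by
  rcases le_or_gt k_jam 0 with hj | hj
  · have hempty : Set.Ioo (0 : ℝ) k_jam = ∅ := Set.Ioo_eq_empty (by linarith)
    refine ⟨fun a ha => ?_, fun a ha => ?_⟩ <;>
      · rw [hempty] at ha; exact absurd ha (Set.notMem_empty a)
  obtain ⟨hkc0, hkcj⟩ := hkc
  have hcj : k_c < k_jam := by
    rcases lt_or_eq_of_le hkcj with h | h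
    · exact h
    · exfalso
      have := hmono (Set.mem_Icc.mpr ⟨le_refl 0, hkc0⟩)
        (Set.mem_Icc.mpr ⟨by linarith, h.ge⟩) (h ▸ hj)
      rw [hQ0, hQjam] at this
      exact lt_irrefl 0 this
  have hc0 : 0 < k_c := by
    rcases lt_or_eq_of_le hkc0 with h | h
    · exact h
    · exfalso
      have := hanti (Set.mem_Icc.mpr ⟨le_refl k_c, hkcj⟩)
        (Set.mem_Icc.mpr ⟨hkcj, le_refl k_jam⟩) (by linarith)
      rw [hQjam, ← h, hQ0] at this
      exact lt_irrefl 0 this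
  have hQc : 0 < Q k_c := hQpos k_c ⟨hc0, hcj⟩
  have key : StrictMonoOn (fun k => D k / S k) (Set.Ioo 0 k_jam) := by
    intro a ha b hb hab
    obtain ⟨ha0, haj⟩ := ha
    obtain ⟨hb0, hbj⟩ := hb
    simp only [hD, hS]
    rcases le_or_gt b k_c with hbc | hbc
    · have hac : a ≤ k_c := le_trans hab.le hbc
      rw [min_eq_left hac, max_eq_right hac, min_eq_left hbc, max_eq_right hbc]
      exact div_lt_div_of_pos_right
        (hmono ⟨ha0.le, hac⟩ ⟨hb0.le, hbc⟩ hab) hQc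
    · have hQb : 0 < Q b := hQpos b ⟨hb0, hbj⟩
      have hQbc : Q b < Q k_c := hanti (Set.mem_Icc.mpr ⟨le_refl k_c, hkcj⟩)
        (Set.mem_Icc.mpr ⟨hbc.le, hbj.le⟩) hbc
      rw [min_eq_right hbc.le, max_eq_left hbc.le]
      rcases le_or_gt a k_c with hac | hac
      · rw [min_eq_left hac, max_eq_right hac]
        have h1 : Q a / Q k_c ≤ 1 := by
          rw [div_le_one hQc]
          exact hmono.monotoneOn ⟨ha0.le, hac⟩ ⟨le_refl 0 |>.trans hc0.le, le_refl k_c⟩ hac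
        have h2 : 1 < Q k_c / Q b := (one_lt_div hQb).mpr hQbc
        linarith
      · rw [min_eq_right hac.le, max_eq_left hac.le]
        have hQa : 0 < Q a := hQpos a ⟨ha0, haj⟩
        exact div_lt_div_of_pos_left hQc hQb
          (hanti ⟨hac.le, haj.le⟩ ⟨hbc.le, hbj.le⟩ hab)
  exact ⟨key, key.injOn⟩
end

section
/- If π_b < 0, then there exists a unique nonempty subset A₁ ⊆ A such that Γ_b = γ_b(A₁), μ_a > Γ_b for all a ∈ A₁, and μ_α ≤ Γ_b for all α ∈ A \ A₁; namely A₁ = {a ∈ A : μ_a > Γ_b}. -/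
open scoped Classical
open Finset

/-- The average demand level of a set of upstream links. -/
noncomputable def gammaFn {ι : Type*} (C μ : ι → ℝ) (π : ℝ) (S : Finset ι) : ℝ :=
  (π + ∑ a ∈ S, C a * μ a) / ∑ a ∈ S, C a

/-- The maximum of `f` over all nonempty subsets of a nonempty finite type. -/
noncomputable def maxSub {ι : Type*} [Fintype ι] (h : Nonempty ι) (f : Finset ι → ℝ) : ℝ :=
  (Finset.univ.powerset.filter Finset.Nonempty).sup'
    ⟨{h.some}, Finset.mem_filter.mpr
      ⟨Finset.mem_powerset.mpr (Finset.subset_univ _), Finset.singleton_nonempty _⟩⟩ f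

/-- if `π < 0`, there exists a unique nonempty `A₁ ⊆ A` with `Γ = γ A₁`,
`μ a > Γ` for all `a ∈ A₁`, and `μ α ≤ Γ` for all `α ∉ A₁`; namely `A₁ = {a | μ a > Γ}`. -/
theorem maxAvgDemand_of_residue_neg
    {ι : Type*} [Fintype ι] (hι : Nonempty ι) (C μ : ι → ℝ) (π : ℝ)
    (hC : ∀ a, 0 < C a) (hπ : π < 0) :
    (∃! A₁ : Finset ι, A₁.Nonempty ∧ maxSub hι (gammaFn C μ π) = gammaFn C μ π A₁ ∧
      (∀ a ∈ A₁, maxSub hι (gammaFn C μ π) < μ a) ∧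
      (∀ a ∉ A₁, μ a ≤ maxSub hι (gammaFn C μ π))) ∧
    (Finset.univ.filter (fun a => maxSub hι (gammaFn C μ π) < μ a)).Nonempty ∧
    maxSub hι (gammaFn C μ π)
      = gammaFn C μ π (Finset.univ.filter (fun a => maxSub hι (gammaFn C μ π) < μ a)) := by
  classical
  set Γ := maxSub hι (gammaFn C μ π) with hΓdef
  have hsumpos : ∀ T : Finset ι, T.Nonempty → 0 < ∑ a ∈ T, C a := fun T hT =>
    Finset.sum_pos (fun a _ => hC a) hT
  have hle : ∀ S : Finset ι, S.Nonempty → gammaFn C μ π S ≤ Γ := by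
    intro S hS
    exact Finset.le_sup' _ (Finset.mem_filter.mpr
      ⟨Finset.mem_powerset.mpr (Finset.subset_univ _), hS⟩)
  obtain ⟨S, hSmem, hSeq⟩ := Finset.exists_mem_eq_sup'
    (⟨{hι.some}, Finset.mem_filter.mpr
      ⟨Finset.mem_powerset.mpr (Finset.subset_univ _), Finset.singleton_nonempty _⟩⟩ :
      (Finset.univ.powerset.filter Finset.Nonempty).Nonempty) (gammaFn C μ π)
  have hSne : S.Nonempty := (Finset.mem_filter.mp hSmem).2
  have hΓS : Γ = gammaFn C μ π S := hSeq
  have hkey : π + ∑ a ∈ S, C a * μ a = Γ * ∑ a ∈ S, C a := by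
    have h := hΓS.symm
    rw [gammaFn, div_eq_iff (ne_of_gt (hsumpos S hSne))] at h
    exact h
  set B : Finset ι := Finset.univ.filter (fun a => Γ < μ a) with hBdef
  have hmemB : ∀ a, a ∈ B ↔ Γ < μ a := by
    intro a; simp [hBdef]
  have hBne : B.Nonempty := by
    by_contra h
    rw [Finset.not_nonempty_iff_eq_empty] at h
    have hall : ∀ a, μ a ≤ Γ := by
      intro a
      by_contra hμ
      push_neg at hμ
      have : a ∈ B := (hmemB a).mpr hμ
      simp [h] at this
    have h1 : ∑ a ∈ S, C a * μ a ≤ Γ * ∑ a ∈ S, C a := by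
      rw [Finset.mul_sum]
      exact Finset.sum_le_sum fun a _ => by nlinarith [hC a, hall a]
    linarith
  -- key inequality: Γ ≤ γ(B)
  have hΓleB : Γ ≤ gammaFn C μ π B := by
    set f : ι → ℝ := fun a => C a * (Γ - μ a) with hf
    set g : ι → ℝ := fun a => C a * (μ a - Γ) with hg
    have e1 := Finset.sum_inter_add_sum_sdiff S B f
    have e2 := Finset.sum_inter_add_sum_sdiff B S g
    have e3 : ∑ a ∈ B ∩ S, g a = ∑ a ∈ S ∩ B, g a := by rw [Finset.inter_comm]
    have e4 : ∑ a ∈ S ∩ B, f a + ∑ a ∈ S ∩ B, g a = 0 := by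
      rw [← Finset.sum_add_distrib]
      exact Finset.sum_eq_zero fun a _ => by simp [hf, hg]; ring
    have hnn1 : 0 ≤ ∑ a ∈ S \ B, f a := by
      apply Finset.sum_nonneg
      intro a ha
      have haB : a ∉ B := (Finset.mem_sdiff.mp ha).2
      have : μ a ≤ Γ := by
        by_contra hμ; push_neg at hμ; exact haB ((hmemB a).mpr hμ)
      have := hC a
      simp only [hf]
      nlinarith
    have hnn2 : 0 ≤ ∑ a ∈ B \ S, g a := by
      apply Finset.sum_nonneg
      intro a ha
      have haB : a ∈ B := (Finset.mem_sdiff.mp ha).1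
      have hμ : Γ < μ a := (hmemB a).mp haB
      have := hC a
      simp only [hg]
      nlinarith
    have hfS : ∑ a ∈ S, f a = Γ * ∑ a ∈ S, C a - ∑ a ∈ S, C a * μ a := by
      rw [Finset.mul_sum, ← Finset.sum_sub_distrib]
      exact Finset.sum_congr rfl fun a _ => by simp [hf]; ring
    have hgB : ∑ a ∈ B, g a = ∑ a ∈ B, C a * μ a - Γ * ∑ a ∈ B, C a := by
      rw [Finset.mul_sum, ← Finset.sum_sub_distrib]
      exact Finset.sum_congr rfl fun a _ => by simp [hg]; ring
    have hmain : Γ * ∑ a ∈ B, C a ≤ π + ∑ a ∈ B, C a * μ a := by linarith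
    rw [gammaFn, le_div_iff₀ (hsumpos B hBne)]
    linarith
  have hΓB : Γ = gammaFn C μ π B := le_antisymm hΓleB (hle B hBne)
  have hBprop : B.Nonempty ∧ Γ = gammaFn C μ π B ∧ (∀ a ∈ B, Γ < μ a) ∧
      (∀ a ∉ B, μ a ≤ Γ) := by
    refine ⟨hBne, hΓB, fun a ha => (hmemB a).mp ha, fun a ha => ?_⟩
    by_contra hμ; push_neg at hμ
    exact ha ((hmemB a).mpr hμ)
  refine ⟨⟨B, hBprop, ?_⟩, hBne, hΓB⟩
  rintro A₁ ⟨-, -, h3, h4⟩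
  ext a
  rw [hmemB a]
  constructor
  · intro ha; exact h3 a ha
  · intro hμ
    by_contra ha
    exact absurd (h4 a ha) (not_le.mpr hμ)
end

section
/- Suppose μ_1 ≥ μ_2 ≥ ... ≥ μ_m and π_b < 0. Define γ_b(l) = γ_b({1,...,l}). Then there exists a unique l* ∈ {1,...,m} such that γ_b(1) < ... < γ_b(l*) ≥ γ_b(l*+1) ≥ ... ≥ γ_b(m), with γ_b(l) < μ_l for l ≤ l* and γ_b(l) ≥ μ_l for l > l*; moreover Γ_b = γ_b(l*). -/
open scoped Classical
open Finset

/-- The average demand level of the first `l` upstream links (links `0,…,l`). -/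
noncomputable def gammaL {m : ℕ} (C μ : Fin m → ℝ) (π : ℝ) (l : Fin m) : ℝ :=
  gammaFn C μ π (Finset.Iic l)

section Aux

variable {m : ℕ} {C μ : Fin m → ℝ} {π : ℝ}

lemma aux_Spos (hC : ∀ a, 0 < C a) (l : Fin m) : 0 < ∑ a ∈ Finset.Iic l, C a :=
  Finset.sum_pos (fun a _ => hC a) ⟨l, Finset.mem_Iic.mpr le_rfl⟩

lemma aux_not_mem {l l' : Fin m} (h : (l : ℕ) + 1 = l') : l' ∉ Finset.Iic l := by
  simp only [Finset.mem_Iic, Fin.le_def]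
  omega

lemma aux_Iic_succ {l l' : Fin m} (h : (l : ℕ) + 1 = l') :
    Finset.Iic l' = insert l' (Finset.Iic l) := by
  ext j
  simp only [Finset.mem_Iic, Finset.mem_insert, Fin.le_def, Fin.ext_iff]
  omega

lemma aux_alg (s c n p mu : ℝ) (hs : 0 < s) (hc : 0 < c) :
    ((p + (c * mu + n)) / (c + s) - (p + n) / s
        = (c / (c + s)) * (mu - (p + n) / s)) ∧
    ((p + (c * mu + n)) / (c + s) - mu = (s / (c + s)) * ((p + n) / s - mu)) := by
  have h1 : s ≠ 0 := ne_of_gt hs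
  have h2 : c + s ≠ 0 := ne_of_gt (by linarith)
  constructor <;> field_simp <;> ring

lemma aux_gamma_succ (hC : ∀ a, 0 < C a) {l l' : Fin m} (h : (l : ℕ) + 1 = l') :
    gammaL C μ π l' - gammaL C μ π l
        = (C l' / (C l' + ∑ a ∈ Finset.Iic l, C a)) * (μ l' - gammaL C μ π l) ∧
    gammaL C μ π l' - μ l'
        = ((∑ a ∈ Finset.Iic l, C a) / (C l' + ∑ a ∈ Finset.Iic l, C a))
            * (gammaL C μ π l - μ l') := by
  have hs := aux_Spos hC l
  unfold gammaL gammaFn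
  rw [aux_Iic_succ h, Finset.sum_insert (aux_not_mem h),
    Finset.sum_insert (aux_not_mem h)]
  exact aux_alg _ _ _ _ _ hs (hC l')

/-- Sign consequences of the successor identities. -/
lemma aux_step (hC : ∀ a, 0 < C a) {l l' : Fin m} (h : (l : ℕ) + 1 = l') :
    (gammaL C μ π l < μ l' → gammaL C μ π l < gammaL C μ π l' ∧ gammaL C μ π l' < μ l') ∧
    (μ l' ≤ gammaL C μ π l → gammaL C μ π l' ≤ gammaL C μ π l ∧ μ l' ≤ gammaL C μ π l') ∧
    (μ l' ≤ gammaL C μ π l' → μ l' ≤ gammaL C μ π l) := by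
  obtain ⟨hA, hB⟩ := aux_gamma_succ (μ := μ) (π := π) hC h
  have hs := aux_Spos hC l
  have hc := hC l'
  have hden : (0:ℝ) < C l' + ∑ a ∈ Finset.Iic l, C a := by linarith
  have hk1 : 0 < C l' / (C l' + ∑ a ∈ Finset.Iic l, C a) := div_pos hc hden
  have hk2 : 0 < (∑ a ∈ Finset.Iic l, C a) / (C l' + ∑ a ∈ Finset.Iic l, C a) :=
    div_pos hs hden
  refine ⟨fun hlt => ?_, fun hle => ?_, fun hle => ?_⟩
  · constructor
    · nlinarith [mul_pos hk1 (sub_pos.mpr hlt)]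
    · nlinarith [mul_pos hk2 (sub_pos.mpr hlt)]
  · constructor
    · nlinarith [mul_nonneg hk1.le (sub_nonneg.mpr hle)]
    · nlinarith [mul_nonneg hk2.le (sub_nonneg.mpr hle)]
  · by_contra hlt
    push_neg at hlt
    have := mul_neg_of_pos_of_neg hk2 (sub_neg.mpr hlt)
    linarith
end Aux

/-- if `μ` is decreasingly ordered and `π < 0`, there is a unique `l*` such
that `γ(1) < ⋯ < γ(l*) ≥ γ(l*+1) ≥ ⋯ ≥ γ(m)`, with `γ(l) < μ l` for `l ≤ l*` and
`γ(l) ≥ μ l` for `l > l*`; moreover `Γ = γ(l*)`. -/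
theorem decreasing_demand_levels_unique_lstar
    {m : ℕ} (hι : Nonempty (Fin m)) (C μ : Fin m → ℝ) (π : ℝ)
    (hC : ∀ a, 0 < C a) (hμ : ∀ i j : Fin m, i ≤ j → μ j ≤ μ i) (hπ : π < 0) :
    ∃! lstar : Fin m,
      (∀ i j : Fin m, i < j → j ≤ lstar → gammaL C μ π i < gammaL C μ π j) ∧
      (∀ i j : Fin m, lstar ≤ i → i ≤ j → gammaL C μ π j ≤ gammaL C μ π i) ∧
      (∀ l : Fin m, l ≤ lstar → gammaL C μ π l < μ l) ∧
      (∀ l : Fin m, lstar < l → μ l ≤ gammaL C μ π l) ∧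
      maxSub hι (gammaFn C μ π) = gammaL C μ π lstar := by
  have hm : 0 < m := Fin.pos_iff_nonempty.mpr hι
  set γ := gammaL C μ π with hγdef
  -- the bottom index satisfies γ < μ
  have hz : γ ⟨0, hm⟩ < μ ⟨0, hm⟩ := by
    have hIic : Finset.Iic (⟨0, hm⟩ : Fin m) = {⟨0, hm⟩} := by
      ext j
      simp only [Finset.mem_Iic, Finset.mem_singleton, Fin.le_def, Fin.ext_iff]
      omega
    rw [hγdef]
    unfold gammaL gammaFn
    rw [hIic, Finset.sum_singleton, Finset.sum_singleton,
      div_lt_iff₀ (hC ⟨0, hm⟩)]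
    nlinarith [hC (⟨0, hm⟩ : Fin m)]
  set T : Finset (Fin m) := Finset.univ.filter (fun l => γ l < μ l) with hT
  have hzT : (⟨0, hm⟩ : Fin m) ∈ T := by
    simp only [hT, Finset.mem_filter, Finset.mem_univ, true_and]; exact hz
  have hTne : T.Nonempty := ⟨_, hzT⟩
  set lstar := T.max' hTne with hls
  have h3star : γ lstar < μ lstar := (Finset.mem_filter.mp (T.max'_mem hTne)).2
  have hmaxT : ∀ l ∈ T, l ≤ lstar := fun l hl => T.le_max' l hl
  -- upward propagation of μ ≤ γ
  have up : ∀ (k : ℕ) (l l' : Fin m), μ l ≤ γ l → (l' : ℕ) = (l : ℕ) + k →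
      μ l' ≤ γ l' := by
    intro k
    induction k with
    | zero =>
      intro l l' hl h
      have : l' = l := Fin.ext (by omega)
      rw [this]; exact hl
    | succ k ih =>
      intro l l' hl h
      have hpm : (l : ℕ) + k < m := by have := l'.isLt; omega
      set p : Fin m := ⟨(l : ℕ) + k, hpm⟩ with hp
      have hpg : μ p ≤ γ p := ih l p hl rfl
      have hadj : (p : ℕ) + 1 = l' := by simp only [hp]; omega
      have hmono : μ l' ≤ μ p := hμ p l' (by rw [Fin.le_def]; omega)
      exact ((aux_step hC hadj).2.1 (le_trans hmono hpg)).2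
  -- property 3
  have P3 : ∀ l : Fin m, l ≤ lstar → γ l < μ l := by
    intro l hl
    by_contra h
    push_neg at h
    have := up ((lstar : ℕ) - (l : ℕ)) l lstar h (by rw [Fin.le_def] at hl; omega)
    linarith
  -- property 4
  have P4 : ∀ l : Fin m, lstar < l → μ l ≤ γ l := by
    intro l hl
    by_contra h
    push_neg at h
    have : l ∈ T := by simp only [hT, Finset.mem_filter, Finset.mem_univ, true_and]; exact h
    exact absurd (hmaxT l this) (not_le.mpr hl)
  -- adjacent strict increase below lstar
  have adj1 : ∀ l l' : Fin m, (l : ℕ) + 1 = l' → l' ≤ lstar → γ l < γ l' := by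
    intro l l' h hl'
    have h3 := P3 l' hl'
    rcases lt_or_ge (γ l) (μ l') with hlt | hle
    · exact ((aux_step hC h).1 hlt).1
    · exact absurd ((aux_step hC h).2.1 hle).2 (not_le.mpr h3)
  -- property 1
  have P1 : ∀ i j : Fin m, i < j → j ≤ lstar → γ i < γ j := by
    have key : ∀ (k : ℕ) (i j : Fin m), (j : ℕ) = (i : ℕ) + (k + 1) → j ≤ lstar →
        γ i < γ j := by
      intro k
      induction k with
      | zero => intro i j h hj; exact adj1 i j (by omega) hj
      | succ k ih =>
        intro i j h hj
        have hpm : (i : ℕ) + (k + 1) < m := by have := j.isLt; omega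
        set p : Fin m := ⟨(i : ℕ) + (k + 1), hpm⟩ with hp
        have hple : p ≤ lstar := le_trans (by rw [Fin.le_def]; simp only [hp]; omega) hj
        exact lt_trans (ih i p rfl hple) (adj1 p j (by simp only [hp]; omega) hj)
    intro i j hij hj
    rw [Fin.lt_def] at hij
    exact key ((j : ℕ) - (i : ℕ) - 1) i j (by omega) hj
  -- adjacent decrease above lstar
  have adj2 : ∀ l l' : Fin m, (l : ℕ) + 1 = l' → lstar ≤ l → γ l' ≤ γ l := by
    intro l l' h hl
    have h4 : μ l' ≤ γ l' := P4 l' (lt_of_le_of_lt hl (by rw [Fin.lt_def]; omega))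
    exact ((aux_step hC h).2.1 ((aux_step hC h).2.2 h4)).1
  -- property 2
  have P2 : ∀ i j : Fin m, lstar ≤ i → i ≤ j → γ j ≤ γ i := by
    have key : ∀ (k : ℕ) (i j : Fin m), (j : ℕ) = (i : ℕ) + k → lstar ≤ i →
        γ j ≤ γ i := by
      intro k
      induction k with
      | zero =>
        intro i j h _
        have : j = i := Fin.ext (by omega)
        rw [this]
      | succ k ih =>
        intro i j h hi
        have hpm : (i : ℕ) + k < m := by have := j.isLt; omega
        set p : Fin m := ⟨(i : ℕ) + k, hpm⟩ with hp
        have hplstar : lstar ≤ p := le_trans hi (by rw [Fin.le_def]; simp only [hp]; omega)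
        exact le_trans (adj2 p j (by simp only [hp]; omega) hplstar) (ih i p rfl hi)
    intro i j hi hij
    rw [Fin.le_def] at hij
    exact key ((j : ℕ) - (i : ℕ)) i j (by omega) hi
  -- the maximum over all nonempty subsets
  have hsumIic : ∑ a ∈ Finset.Iic lstar, C a * (μ a - γ lstar) = -π := by
    have hs := aux_Spos hC lstar
    have h1 : (∑ a ∈ Finset.Iic lstar, C a) * γ lstar
        = π + ∑ a ∈ Finset.Iic lstar, C a * μ a := by
      rw [hγdef]; unfold gammaL gammaFn
      field_simp
    have h2 : ∑ a ∈ Finset.Iic lstar, C a * (μ a - γ lstar)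
        = (∑ a ∈ Finset.Iic lstar, C a * μ a)
            - (∑ a ∈ Finset.Iic lstar, C a) * γ lstar := by
      simp only [mul_sub]
      rw [Finset.sum_sub_distrib, ← Finset.sum_mul]
    linarith
  have hub : ∀ S : Finset (Fin m), S.Nonempty → gammaFn C μ π S ≤ γ lstar := by
    intro S hS
    have hSC : 0 < ∑ a ∈ S, C a := Finset.sum_pos (fun a _ => hC a) hS
    rw [gammaFn, div_le_iff₀ hSC]
    have hkey : ∑ a ∈ S, C a * (μ a - γ lstar) ≤ -π := by
      have hsplit := Finset.sum_inter_add_sum_sdiff S (Finset.Iic lstar)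
        (fun a => C a * (μ a - γ lstar))
      have hneg : ∑ a ∈ S \ Finset.Iic lstar, C a * (μ a - γ lstar) ≤ 0 := by
        apply Finset.sum_nonpos
        intro a ha
        have halstar : lstar < a := by
          have := (Finset.mem_sdiff.mp ha).2
          simpa using not_le.mp (by simpa using this)
        have : μ a ≤ γ lstar := le_trans (P4 a halstar) (P2 lstar a le_rfl halstar.le)
        have hCa := hC a
        nlinarith
      have hmono2 : ∑ a ∈ S ∩ Finset.Iic lstar, C a * (μ a - γ lstar)
          ≤ ∑ a ∈ Finset.Iic lstar, C a * (μ a - γ lstar) := by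
        apply Finset.sum_le_sum_of_subset_of_nonneg (Finset.inter_subset_right)
        intro a ha _
        have hale : a ≤ lstar := Finset.mem_Iic.mp ha
        have : γ lstar < μ a := lt_of_lt_of_le h3star (hμ a lstar hale)
        have hCa := hC a
        nlinarith
      linarith [hsplit, hneg, hmono2, hsumIic]
    have hexp : ∑ a ∈ S, C a * (μ a - γ lstar)
        = (∑ a ∈ S, C a * μ a) - (∑ a ∈ S, C a) * γ lstar := by
      simp only [mul_sub]
      rw [Finset.sum_sub_distrib, ← Finset.sum_mul]
    nlinarith [hkey, hexp]
  have hmaxeq : maxSub hι (gammaFn C μ π) = γ lstar := by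
    apply le_antisymm
    · apply Finset.sup'_le
      intro S hS
      exact hub S (Finset.mem_filter.mp hS).2
    · have hmem : Finset.Iic lstar ∈
          Finset.univ.powerset.filter Finset.Nonempty :=
        Finset.mem_filter.mpr ⟨Finset.mem_powerset.mpr (Finset.subset_univ _),
          ⟨lstar, Finset.mem_Iic.mpr le_rfl⟩⟩
      exact Finset.le_sup' (f := gammaFn C μ π) hmem
  refine ⟨lstar, ⟨P1, P2, P3, P4, hmaxeq⟩, ?_⟩
  rintro y ⟨-, -, q3, q4, -⟩
  by_contra hne
  rcases lt_trichotomy y lstar with hlt | heq | hgt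
  · have := q4 lstar hlt
    linarith [h3star]
  · exact hne heq
  · have := P4 y hgt
    linarith [q3 y le_rfl]
end

section
/- Define g(μ, ν) = min_{b∈B} max_{nonempty A₁ ⊆ A} γ_b(A₁), where γ_b(A₁) = (π_b + Σ_{a∈A₁} C_{a→b} μ_a)/(Σ_{a∈A₁} C_{a→b}) and π_b = C_b ν_b − Σ_{a∈A} C_{a→b} μ_a. Then g(μ, ν) ≥ max_{a∈A} μ_a if and only if min_{b∈B} π_b ≥ 0. -/
open scoped Classical
open Finset

/-- The residue supply `π_b = C_b ν_b − Σ_a C_{a→b} μ_a`. -/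
noncomputable def resid {α β : Type*} [Fintype α] (Cb : β → ℝ) (Cab : α → β → ℝ)
    (μ : α → ℝ) (ν : β → ℝ) (b : β) : ℝ :=
  Cb b * ν b - ∑ a, Cab a b * μ a

/-- The critical demand level `g(μ,ν) = min_b max_{∅ ≠ A₁ ⊆ A} γ_b(A₁)`. -/
noncomputable def criticalDemandLevel {α β : Type*} [Fintype α] [Fintype β]
    (hA : Nonempty α) (hB : Nonempty β) (Cb : β → ℝ) (Cab : α → β → ℝ)
    (μ : α → ℝ) (ν : β → ℝ) : ℝ :=
  Finset.univ.inf' Finset.univ_nonempty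
    (fun b => maxSub hA (gammaFn (fun a => Cab a b) μ (resid Cb Cab μ ν b)))

/-- `g(μ,ν) ≥ max_a μ_a` if and only if `min_b π_b ≥ 0`. -/
theorem criticalDemandLevel_ge_maxDemand_iff
    {α β : Type*} [Fintype α] [Fintype β] (hA : Nonempty α) (hB : Nonempty β)
    (Cb : β → ℝ) (Cab : α → β → ℝ) (μ : α → ℝ) (ν : β → ℝ)
    (hCab : ∀ a b, 0 < Cab a b) (hCb : ∀ b, 0 < Cb b)
    (hμ : ∀ a, μ a ∈ Set.Icc (0 : ℝ) 1) (hν : ∀ b, ν b ∈ Set.Icc (0 : ℝ) 1) :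
    Finset.univ.sup' Finset.univ_nonempty μ ≤ criticalDemandLevel hA hB Cb Cab μ ν ↔
      0 ≤ Finset.univ.inf' Finset.univ_nonempty (resid Cb Cab μ ν) := by
  set m := Finset.univ.sup' Finset.univ_nonempty μ with hm
  constructor
  · intro h
    rw [Finset.le_inf'_iff]
    intro b _
    by_contra hπ
    push_neg at hπ
    have hb : m ≤ maxSub hA (gammaFn (fun a => Cab a b) μ (resid Cb Cab μ ν b)) :=
      le_trans h (Finset.inf'_le _ (Finset.mem_univ b))
    rw [maxSub] at hb
    obtain ⟨S, hS, hle⟩ := (Finset.le_sup'_iff _).mp hb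
    have hSne : S.Nonempty := (Finset.mem_filter.mp hS).2
    have hsum : 0 < ∑ a ∈ S, Cab a b := Finset.sum_pos (fun a _ => hCab a b) hSne
    have hnum : ∑ a ∈ S, Cab a b * μ a ≤ (∑ a ∈ S, Cab a b) * m := by
      rw [Finset.sum_mul]
      exact Finset.sum_le_sum fun a _ => mul_le_mul_of_nonneg_left
        (Finset.le_sup' μ (Finset.mem_univ a)) (hCab a b).le
    have : gammaFn (fun a => Cab a b) μ (resid Cb Cab μ ν b) S < m := by
      rw [gammaFn, div_lt_iff₀ hsum]
      calc resid Cb Cab μ ν b + ∑ a ∈ S, Cab a b * μ a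
          < 0 + (∑ a ∈ S, Cab a b) * m := by
            exact add_lt_add_of_lt_of_le hπ hnum
        _ = m * ∑ a ∈ S, Cab a b := by ring
    linarith
  · intro h
    rw [Finset.le_inf'_iff] at h
    rw [criticalDemandLevel, Finset.le_inf'_iff]
    intro b _
    have hπ : 0 ≤ resid Cb Cab μ ν b := h b (Finset.mem_univ b)
    obtain ⟨a₀, _, ha₀⟩ := Finset.exists_mem_eq_sup' Finset.univ_nonempty μ
    have hmem : ({a₀} : Finset α) ∈ Finset.univ.powerset.filter Finset.Nonempty :=
      Finset.mem_filter.mpr ⟨Finset.mem_powerset.mpr (Finset.subset_univ _),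
        Finset.singleton_nonempty _⟩
    refine le_trans ?_ (Finset.le_sup' _ hmem)
    rw [gammaFn, Finset.sum_singleton, Finset.sum_singleton, le_div_iff₀ (hCab a₀ b)]
    have : μ a₀ = m := ha₀.symm
    nlinarith [hCab a₀ b]
end

section
/- If min_{b∈B} π_b < 0, then there exists a unique nonempty subset A* ⊆ A such that g(μ,ν) = min_{b∈B} γ_b(A*) = max over nonempty A₁ ⊆ A of min_{b∈B} γ_b(A₁), and min_{a∈A*} μ_a > g(μ,ν) ≥ max_{α∈A\A*} μ_α. In particular, min-max equals max-min: min_b max_{A₁} γ_b(A₁) = max_{A₁} min_b γ_b(A₁). -/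
open scoped Classical
open Finset

/-- `min_b γ_b(A₁)`. -/
noncomputable def minGamma {α β : Type*} [Fintype α] [Fintype β] (hB : Nonempty β)
    (Cb : β → ℝ) (Cab : α → β → ℝ) (μ : α → ℝ) (ν : β → ℝ) (S : Finset α) : ℝ :=
  Finset.univ.inf' Finset.univ_nonempty
    (fun b => gammaFn (fun a => Cab a b) μ (resid Cb Cab μ ν b) S)

/-- Every nonempty subset bounds `maxSub` from below. -/
lemma le_maxSub {ι : Type*} [Fintype ι] (h : Nonempty ι) (f : Finset ι → ℝ)
    {S : Finset ι} (hS : S.Nonempty) : f S ≤ maxSub h f :=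
  Finset.le_sup' f (Finset.mem_filter.mpr
    ⟨Finset.mem_powerset.mpr (Finset.subset_univ _), hS⟩)

/-- `maxSub` is bounded by any uniform bound. -/
lemma maxSub_le {ι : Type*} [Fintype ι] (h : Nonempty ι) (f : Finset ι → ℝ) {t : ℝ}
    (ht : ∀ S : Finset ι, S.Nonempty → f S ≤ t) : maxSub h f ≤ t :=
  Finset.sup'_le _ _ (fun S hS => ht S (Finset.mem_filter.mp hS).2)

/-- `maxSub` is attained. -/
lemma exists_maxSub {ι : Type*} [Fintype ι] (h : Nonempty ι) (f : Finset ι → ℝ) :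
    ∃ S : Finset ι, S.Nonempty ∧ maxSub h f = f S := by
  obtain ⟨S, hS, hfS⟩ := Finset.exists_mem_eq_sup'
    (⟨{h.some}, Finset.mem_filter.mpr
      ⟨Finset.mem_powerset.mpr (Finset.subset_univ _), Finset.singleton_nonempty _⟩⟩ :
      (Finset.univ.powerset.filter Finset.Nonempty).Nonempty) f
  exact ⟨S, (Finset.mem_filter.mp hS).2, hfS⟩

lemma sum_mul_sub {ι : Type*} (c μ : ι → ℝ) (g : ℝ) (S : Finset ι) :
    ∑ a ∈ S, c a * (μ a - g) = (∑ a ∈ S, c a * μ a) - g * ∑ a ∈ S, c a := by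
  simp only [mul_sub]
  rw [Finset.sum_sub_distrib, ← Finset.sum_mul, mul_comm]

/-- The set of all strictly-positive terms maximizes `S ↦ ∑_{a∈S} c a (μ a - g)`. -/
lemma sum_shift_le {ι : Type*} [Fintype ι] (c μ : ι → ℝ) (g : ℝ)
    (hc : ∀ a, 0 < c a) (S : Finset ι) :
    ∑ a ∈ S, c a * (μ a - g) ≤
      ∑ a ∈ Finset.univ.filter (fun a => g < μ a), c a * (μ a - g) := by
  classical
  calc ∑ a ∈ S, c a * (μ a - g)
      ≤ ∑ a ∈ S.filter (fun a => g < μ a), c a * (μ a - g) := by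
        rw [← Finset.sum_filter_add_sum_filter_not S (fun a => g < μ a)]
        have h2 : ∑ a ∈ S.filter (fun a => ¬ g < μ a), c a * (μ a - g) ≤ 0 :=
          Finset.sum_nonpos (fun a ha => by
            have := (Finset.mem_filter.mp ha).2
            exact mul_nonpos_of_nonneg_of_nonpos (hc a).le (by linarith [not_lt.mp this]))
        linarith
    _ ≤ _ := Finset.sum_le_sum_of_subset_of_nonneg
        (Finset.filter_subset_filter _ (Finset.subset_univ S))
        (fun a ha _ => mul_nonneg (hc a).le
          (by have := (Finset.mem_filter.mp ha).2; linarith))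

/-- if `min_b π_b < 0`, there is a unique nonempty `A* ⊆ A` such that
`g(μ,ν) = min_b γ_b(A*) = max_{A₁} min_b γ_b(A₁)` and
`min_{a∈A*} μ_a > g(μ,ν) ≥ max_{α∉A*} μ_α`; in particular min-max equals max-min. -/
theorem criticalDemandLevel_minimax_of_residue_neg
    {α β : Type*} [Fintype α] [Fintype β] (hA : Nonempty α) (hB : Nonempty β)
    (Cb : β → ℝ) (Cab : α → β → ℝ) (μ : α → ℝ) (ν : β → ℝ)
    (hCab : ∀ a b, 0 < Cab a b) (hCb : ∀ b, 0 < Cb b)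
    (hμ : ∀ a, μ a ∈ Set.Icc (0 : ℝ) 1) (hν : ∀ b, ν b ∈ Set.Icc (0 : ℝ) 1)
    (hπ : Finset.univ.inf' Finset.univ_nonempty (resid Cb Cab μ ν) < 0) :
    (∃! Astar : Finset α, Astar.Nonempty ∧
      criticalDemandLevel hA hB Cb Cab μ ν = minGamma hB Cb Cab μ ν Astar ∧
      (∀ a ∈ Astar, criticalDemandLevel hA hB Cb Cab μ ν < μ a) ∧
      (∀ a ∉ Astar, μ a ≤ criticalDemandLevel hA hB Cb Cab μ ν)) ∧
    criticalDemandLevel hA hB Cb Cab μ ν = maxSub hA (minGamma hB Cb Cab μ ν) := by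
  classical
  set g := criticalDemandLevel hA hB Cb Cab μ ν with hgdef
  set Astar : Finset α := Finset.univ.filter (fun a => g < μ a) with hAdef
  -- notation shortcuts
  set π : β → ℝ := resid Cb Cab μ ν with hπdef
  have sumC_pos : ∀ (b : β) (S : Finset α), S.Nonempty →
      0 < ∑ a ∈ S, Cab a b :=
    fun b S hS => Finset.sum_pos (fun a _ => hCab a b) hS
  -- `g ≤ M b` for every `b`
  have hg_le : ∀ b : β, g ≤ maxSub hA (gammaFn (fun a => Cab a b) μ (π b)) :=
    fun b => Finset.inf'_le _ (Finset.mem_univ b)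
  -- the minimizer b*
  obtain ⟨bstar, -, hbstar⟩ := Finset.exists_mem_eq_inf'
    (Finset.univ_nonempty : (Finset.univ : Finset β).Nonempty)
    (fun b => maxSub hA (gammaFn (fun a => Cab a b) μ (π b)))
  have hgbstar : g = maxSub hA (gammaFn (fun a => Cab a bstar) μ (π bstar)) := hbstar
  -- Astar is nonempty
  have hAne : Astar.Nonempty := by
    obtain ⟨b0, -, hb0⟩ := Finset.exists_mem_eq_inf'
      (Finset.univ_nonempty : (Finset.univ : Finset β).Nonempty) (resid Cb Cab μ ν)
    rw [hb0] at hπ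
    obtain ⟨a0, -, ha0⟩ := Finset.exists_max_image (Finset.univ : Finset α) μ
      Finset.univ_nonempty
    obtain ⟨S0, hS0ne, hS0⟩ := exists_maxSub hA (gammaFn (fun a => Cab a b0) μ (π b0))
    have hpos := sumC_pos b0 S0 hS0ne
    have hlt : gammaFn (fun a => Cab a b0) μ (π b0) S0 < μ a0 := by
      unfold gammaFn
      rw [div_lt_iff₀ hpos]
      have hsum : ∑ a ∈ S0, Cab a b0 * μ a ≤ μ a0 * ∑ a ∈ S0, Cab a b0 := by
        rw [Finset.mul_sum]
        exact Finset.sum_le_sum (fun a _ => by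
          rw [mul_comm (μ a0)]
          exact mul_le_mul_of_nonneg_left (ha0 a (Finset.mem_univ a)) (hCab a b0).le)
      have : π b0 < 0 := hπ
      linarith
    refine ⟨a0, Finset.mem_filter.mpr ⟨Finset.mem_univ a0, ?_⟩⟩
    calc g ≤ _ := hg_le b0
      _ = _ := hS0
      _ < μ a0 := hlt
  have hAposC : ∀ b : β, 0 < ∑ a ∈ Astar, Cab a b := fun b => sumC_pos b Astar hAne
  -- Claim 1 : for every `b`, `g ≤ γ_b(Astar)`
  have claim1 : ∀ b : β, g ≤ gammaFn (fun a => Cab a b) μ (π b) Astar := by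
    intro b
    obtain ⟨Sb, hSbne, hSb⟩ := exists_maxSub hA (gammaFn (fun a => Cab a b) μ (π b))
    have h1 : g ≤ gammaFn (fun a => Cab a b) μ (π b) Sb := hSb ▸ hg_le b
    have hpos := sumC_pos b Sb hSbne
    rw [gammaFn, le_div_iff₀ hpos] at h1
    have h2 : g * ∑ a ∈ Sb, Cab a b ≤ π b + ∑ a ∈ Sb, Cab a b * μ a := h1
    have h3 : ∑ a ∈ Sb, Cab a b * (μ a - g) ≤ ∑ a ∈ Astar, Cab a b * (μ a - g) :=
      sum_shift_le (fun a => Cab a b) μ g (fun a => hCab a b) Sb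
    rw [sum_mul_sub, sum_mul_sub] at h3
    rw [gammaFn, le_div_iff₀ (hAposC b)]
    linarith
  -- Claim 2 : `γ_{b*}(Astar) ≤ g`
  have claim2 : gammaFn (fun a => Cab a bstar) μ (π bstar) Astar ≤ g := by
    rw [hgbstar]
    exact le_maxSub hA _ hAne
  -- `minGamma Astar = g`
  have hminA : minGamma hB Cb Cab μ ν Astar = g := by
    apply le_antisymm
    · exact le_trans (Finset.inf'_le _ (Finset.mem_univ bstar)) claim2
    · exact Finset.le_inf' _ _ (fun b _ => claim1 b)
  -- minimax equality
  have hminimax : g = maxSub hA (minGamma hB Cb Cab μ ν) := by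
    apply le_antisymm
    · rw [← hminA]
      exact le_maxSub hA _ hAne
    · apply maxSub_le
      intro S hSne
      calc minGamma hB Cb Cab μ ν S
          ≤ gammaFn (fun a => Cab a bstar) μ (π bstar) S :=
            Finset.inf'_le _ (Finset.mem_univ bstar)
        _ ≤ maxSub hA (gammaFn (fun a => Cab a bstar) μ (π bstar)) := le_maxSub hA _ hSne
        _ = g := hgbstar.symm
  refine ⟨⟨Astar, ⟨hAne, hminA.symm, ?_, ?_⟩, ?_⟩, hminimax⟩
  · intro a ha
    exact (Finset.mem_filter.mp ha).2
  · intro a ha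
    have : ¬ g < μ a := fun h => ha (Finset.mem_filter.mpr ⟨Finset.mem_univ a, h⟩)
    exact not_lt.mp this
  · rintro A' ⟨-, -, hin, hout⟩
    ext a
    simp only [hAdef, Finset.mem_filter, Finset.mem_univ, true_and]
    constructor
    · intro haA'
      exact hin a haA'
    · intro hga
      by_contra haA'
      exact absurd hga (not_lt.mpr (hout a haA'))
end

section
/- For a merge junction with two upstream links (capacities C₁, C₂, demands d₁, d₂) and one downstream link with supply s₃, Θ = max{(s₃−d₂)/C₁, (s₃−d₁)/C₂, s₃/(C₁+C₂)}, the fluxes q_i = min{d_i, Θ C_i} (i = 1,2) equal the fair-merge fluxes: q₁ = min{d₁, max{s₃−d₂, C₁ s₃/(C₁+C₂)}} and q₂ = min{d₂, max{s₃−d₁, C₂ s₃/(C₁+C₂)}}. -/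
private lemma min_max_absorb (a m x : ℝ) (h : x ≤ m ∨ a ≤ m) : min a (max m x) = min a m := by
  rcases h with h | h
  · rw [max_eq_left h]
  · rw [min_eq_left h, min_eq_left (h.trans (le_max_left m x))]

private lemma merge_aux (C₁ C₂ d₁ d₂ s₃ : ℝ) (hC₁ : 0 < C₁) (hC₂ : 0 < C₂) :
    min d₁ (max (max ((s₃ - d₂) / C₁) ((s₃ - d₁) / C₂)) (s₃ / (C₁ + C₂)) * C₁)
      = min d₁ (max (s₃ - d₂) (C₁ * s₃ / (C₁ + C₂))) := by
  have hC12 : 0 < C₁ + C₂ := by linarith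
  have key : max (max ((s₃ - d₂) / C₁) ((s₃ - d₁) / C₂)) (s₃ / (C₁ + C₂)) * C₁
      = max (max (s₃ - d₂) (C₁ * s₃ / (C₁ + C₂))) ((s₃ - d₁) / C₂ * C₁) := by
    rw [max_mul_of_nonneg _ _ hC₁.le, max_mul_of_nonneg _ _ hC₁.le,
      div_mul_cancel₀ _ hC₁.ne']
    have hr : s₃ / (C₁ + C₂) * C₁ = C₁ * s₃ / (C₁ + C₂) := by ring
    rw [hr, max_assoc, max_comm ((s₃ - d₁) / C₂ * C₁), ← max_assoc]
  rw [key]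
  apply min_max_absorb
  rcases le_or_gt ((s₃ - d₁) / C₂ * C₁) (C₁ * s₃ / (C₁ + C₂)) with h | h
  · exact Or.inl (h.trans (le_max_right _ _))
  · right
    have h2 : C₁ * s₃ * C₂ < (s₃ - d₁) * C₁ * (C₁ + C₂) := by
      rw [div_mul_eq_mul_div, div_lt_div_iff₀ hC12 hC₂] at h
      exact h
    have hd : d₁ ≤ C₁ * s₃ / (C₁ + C₂) := by
      rw [le_div_iff₀ hC12]
      nlinarith
    exact hd.trans (le_max_right _ _)

/-- for a merge junction with two upstream links and one downstream link,
with `Θ = max{(s₃−d₂)/C₁, (s₃−d₁)/C₂, s₃/(C₁+C₂)}`, the fluxes `q_i = min{d_i, Θ C_i}`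
equal the fair-merge fluxes. -/
theorem merge_flux_eq_fair_merge
    (C₁ C₂ d₁ d₂ s₃ : ℝ) (hC₁ : 0 < C₁) (hC₂ : 0 < C₂)
    (hd₁ : 0 ≤ d₁) (hd₁' : d₁ ≤ C₁) (hd₂ : 0 ≤ d₂) (hd₂' : d₂ ≤ C₂) (hs₃ : 0 ≤ s₃)
    (Θ : ℝ) (hΘ : Θ = max (max ((s₃ - d₂) / C₁) ((s₃ - d₁) / C₂)) (s₃ / (C₁ + C₂))) :
    min d₁ (Θ * C₁) = min d₁ (max (s₃ - d₂) (C₁ * s₃ / (C₁ + C₂))) ∧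
    min d₂ (Θ * C₂) = min d₂ (max (s₃ - d₁) (C₂ * s₃ / (C₁ + C₂))) := by
  subst hΘ
  constructor
  · exact merge_aux C₁ C₂ d₁ d₂ s₃ hC₁ hC₂
  · have := merge_aux C₂ C₁ d₂ d₁ s₃ hC₂ hC₁
    rw [max_comm ((s₃ - d₁) / C₂), add_comm C₂ C₁] at this
    exact this
end

section
/- In the minimax characterization with min_b π_b < 0, the optimal set A* equals {a ∈ A : μ_a > g(μ,ν)}, and removing from any optimizing set A₁ all elements a with μ_a = min_b γ_b(A₁) leaves the value min_b γ_b(A₁) unchanged. -/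
open scoped Classical
open Finset

/-- when `min_b π_b < 0`, the optimal set `A*` in the minimax
characterization equals `{a | μ_a > g(μ,ν)}`, and removing from any optimizing set `A₁`
all elements `a` with `μ_a = min_b γ_b(A₁)` leaves the value `min_b γ_b(A₁)` unchanged. -/
theorem optimal_set_eq_filter_and_removal_invariance
    {α β : Type*} [Fintype α] [Fintype β] (hA : Nonempty α) (hB : Nonempty β)
    (Cb : β → ℝ) (Cab : α → β → ℝ) (μ : α → ℝ) (ν : β → ℝ)
    (hCab : ∀ a b, 0 < Cab a b) (hCb : ∀ b, 0 < Cb b)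
    (hμ : ∀ a, μ a ∈ Set.Icc (0 : ℝ) 1) (hν : ∀ b, ν b ∈ Set.Icc (0 : ℝ) 1)
    (hπ : Finset.univ.inf' Finset.univ_nonempty (resid Cb Cab μ ν) < 0) :
    ((Finset.univ.filter (fun a => criticalDemandLevel hA hB Cb Cab μ ν < μ a)).Nonempty ∧
      criticalDemandLevel hA hB Cb Cab μ ν
        = minGamma hB Cb Cab μ ν
            (Finset.univ.filter (fun a => criticalDemandLevel hA hB Cb Cab μ ν < μ a)) ∧
      ∀ A₁ : Finset α, A₁.Nonempty →
        criticalDemandLevel hA hB Cb Cab μ ν = minGamma hB Cb Cab μ ν A₁ →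
        (∀ a ∈ A₁, criticalDemandLevel hA hB Cb Cab μ ν < μ a) →
        (∀ a ∉ A₁, μ a ≤ criticalDemandLevel hA hB Cb Cab μ ν) →
        A₁ = Finset.univ.filter (fun a => criticalDemandLevel hA hB Cb Cab μ ν < μ a)) ∧
    (∀ A₁ : Finset α, A₁.Nonempty →
      minGamma hB Cb Cab μ ν A₁ = maxSub hA (minGamma hB Cb Cab μ ν) →
      (A₁.filter (fun a => μ a ≠ minGamma hB Cb Cab μ ν A₁)).Nonempty ∧
        minGamma hB Cb Cab μ ν (A₁.filter (fun a => μ a ≠ minGamma hB Cb Cab μ ν A₁))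
          = minGamma hB Cb Cab μ ν A₁) := by
  classical
  set g := criticalDemandLevel hA hB Cb Cab μ ν with hgdef
  set γ : β → Finset α → ℝ :=
    fun b S => gammaFn (fun a => Cab a b) μ (resid Cb Cab μ ν b) S with hγdef
  -- positivity of denominators
  have hD : ∀ (b : β) (S : Finset α), S.Nonempty → (0:ℝ) < ∑ a ∈ S, Cab a b :=
    fun b S hS => Finset.sum_pos (fun a _ => hCab a b) hS
  -- the fundamental identity  γ b S - t = (π b + ∑_{S} C (μ - t)) / D
  have hdiff : ∀ (t : ℝ) (b : β) (S : Finset α), S.Nonempty →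
      γ b S - t = (resid Cb Cab μ ν b + ∑ a ∈ S, Cab a b * (μ a - t)) / ∑ a ∈ S, Cab a b := by
    intro t b S hS
    have hD' := (hD b S hS).ne'
    have hsum : ∑ a ∈ S, Cab a b * (μ a - t)
        = (∑ a ∈ S, Cab a b * μ a) - (∑ a ∈ S, Cab a b) * t := by
      rw [Finset.sum_mul, ← Finset.sum_sub_distrib]
      exact Finset.sum_congr rfl fun a _ => by ring
    simp only [hγdef, gammaFn]
    rw [div_sub' hD', hsum]
    ring_nf
  have hge_iff : ∀ (t : ℝ) (b : β) (S : Finset α) (hS : S.Nonempty),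
      (t ≤ γ b S ↔ 0 ≤ resid Cb Cab μ ν b + ∑ a ∈ S, Cab a b * (μ a - t)) := by
    intro t b S hS
    rw [← sub_nonneg, hdiff t b S hS, le_div_iff₀ (hD b S hS), zero_mul]
  -- membership in the index set of maxSub
  have hmem : ∀ S : Finset α, S.Nonempty →
      S ∈ (Finset.univ.powerset.filter Finset.Nonempty) := fun S hS =>
    Finset.mem_filter.mpr ⟨Finset.mem_powerset.mpr (Finset.subset_univ S), hS⟩
  have hle_max : ∀ (f : Finset α → ℝ) (S : Finset α), S.Nonempty → f S ≤ maxSub hA f :=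
    fun f S hS => Finset.le_sup' f (hmem S hS)
  have hmax_ex : ∀ f : Finset α → ℝ, ∃ S : Finset α, S.Nonempty ∧ maxSub hA f = f S := by
    intro f
    obtain ⟨S, hSmem, hSeq⟩ := Finset.exists_mem_eq_sup'
      (⟨{hA.some}, hmem _ (Finset.singleton_nonempty _)⟩ :
        (Finset.univ.powerset.filter Finset.Nonempty).Nonempty) f
    exact ⟨S, (Finset.mem_filter.mp hSmem).2, hSeq⟩
  -- g ≤ maxSub of each column
  have hg_le : ∀ b : β, g ≤ maxSub hA (γ b) := fun b =>
    Finset.inf'_le _ (Finset.mem_univ b)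
  -- some b with residual < 0
  obtain ⟨bneg, -, hbneg⟩ := (Finset.inf'_lt_iff Finset.univ_nonempty).mp hπ
  -- the candidate optimal set
  set Astar : Finset α := Finset.univ.filter (fun a => g < μ a) with hAstardef
  -- A* is nonempty
  have hAstar_ne : Astar.Nonempty := by
    by_contra hempty
    have hall : ∀ a : α, μ a ≤ g := by
      intro a
      by_contra hlt
      exact hempty ⟨a, Finset.mem_filter.mpr ⟨Finset.mem_univ a, not_le.mp hlt⟩⟩
    have hlt : maxSub hA (γ bneg) < g := by
      obtain ⟨S, hS, hSeq⟩ := hmax_ex (γ bneg)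
      rw [hSeq, ← sub_neg, hdiff g bneg S hS]
      apply div_neg_of_neg_of_pos _ (hD bneg S hS)
      have hsum : ∑ a ∈ S, Cab a bneg * (μ a - g) ≤ 0 :=
        Finset.sum_nonpos fun a _ =>
          mul_nonpos_of_nonneg_of_nonpos (hCab a bneg).le (sub_nonpos.mpr (hall a))
      linarith
    exact absurd (hg_le bneg) (not_le.mpr hlt)
  -- key: for every b, g ≤ γ b Astar
  have hkey : ∀ b : β, g ≤ γ b Astar := by
    intro b
    obtain ⟨S, hS, hSeq⟩ := hmax_ex (γ b)
    have h0 : 0 ≤ resid Cb Cab μ ν b + ∑ a ∈ S, Cab a b * (μ a - g) :=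
      (hge_iff g b S hS).mp (hSeq ▸ hg_le b)
    have hsum_le : ∑ a ∈ S, Cab a b * (μ a - g) ≤ ∑ a ∈ Astar, Cab a b * (μ a - g) := by
      have h1 : ∑ a ∈ S, Cab a b * (μ a - g)
          ≤ ∑ a ∈ S.filter (fun a => g < μ a), Cab a b * (μ a - g) := by
        rw [← Finset.sum_filter_add_sum_filter_not S (fun a => g < μ a)]
        have : ∑ a ∈ S.filter (fun a => ¬ g < μ a), Cab a b * (μ a - g) ≤ 0 :=
          Finset.sum_nonpos fun a ha =>
            mul_nonpos_of_nonneg_of_nonpos (hCab a b).le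
              (sub_nonpos.mpr (not_lt.mp (Finset.mem_filter.mp ha).2))
        linarith
      refine h1.trans (Finset.sum_le_sum_of_subset_of_nonneg
        (Finset.filter_subset_filter _ (Finset.subset_univ S)) ?_)
      intro a ha _
      exact mul_nonneg (hCab a b).le
        (sub_nonneg.mpr (le_of_lt (Finset.mem_filter.mp ha).2))
    exact (hge_iff g b Astar hAstar_ne).mpr (by linarith)
  -- minGamma of any nonempty set is ≤ g
  have hminG_le : ∀ S : Finset α, S.Nonempty → minGamma hB Cb Cab μ ν S ≤ g := by
    intro S hS
    obtain ⟨b₀, -, hb₀⟩ := Finset.exists_mem_eq_inf' (Finset.univ_nonempty (α := β))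
      (fun b => maxSub hA (γ b))
    calc minGamma hB Cb Cab μ ν S ≤ γ b₀ S := Finset.inf'_le _ (Finset.mem_univ b₀)
      _ ≤ maxSub hA (γ b₀) := hle_max _ S hS
      _ = g := hb₀.symm
  -- g = minGamma A*
  have hgmin : g = minGamma hB Cb Cab μ ν Astar :=
    le_antisymm (Finset.le_inf' _ _ fun b _ => hkey b) (hminG_le Astar hAstar_ne)
  -- max-min equals g
  have hM : maxSub hA (minGamma hB Cb Cab μ ν) = g := by
    apply le_antisymm
    · obtain ⟨S, hS, hSeq⟩ := hmax_ex (minGamma hB Cb Cab μ ν)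
      rw [hSeq]; exact hminG_le S hS
    · rw [hgmin]; exact hle_max _ Astar hAstar_ne
  refine ⟨⟨hAstar_ne, hgmin, ?_⟩, ?_⟩
  · -- uniqueness of the optimal set (under the sandwich hypotheses)
    intro A₁ hA₁ hval hin hout
    ext a
    simp only [hAstardef, Finset.mem_filter, Finset.mem_univ, true_and]
    constructor
    · exact hin a
    · intro hga
      by_contra hnot
      exact absurd hga (not_lt.mpr (hout a hnot))
  · -- removal invariance
    intro A₁ hA₁ hopt
    have hvA₁ : minGamma hB Cb Cab μ ν A₁ = g := by rw [hopt, hM]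
    have hγA₁ : ∀ b : β, g ≤ γ b A₁ := by
      intro b
      rw [← hvA₁]
      exact Finset.inf'_le _ (Finset.mem_univ b)
    set A₂ : Finset α := A₁.filter (fun a => μ a ≠ minGamma hB Cb Cab μ ν A₁) with hA₂def
    -- the filtered set is nonempty
    have hA₂ne : A₂.Nonempty := by
      by_contra hempty
      have hall : ∀ a ∈ A₁, μ a = g := by
        intro a ha
        by_contra hne
        exact hempty ⟨a, Finset.mem_filter.mpr ⟨ha, by rw [hvA₁]; exact hne⟩⟩
      have hlt : γ bneg A₁ < g := by
        rw [← sub_neg, hdiff g bneg A₁ hA₁]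
        apply div_neg_of_neg_of_pos _ (hD bneg A₁ hA₁)
        have hsum : ∑ a ∈ A₁, Cab a bneg * (μ a - g) = 0 :=
          Finset.sum_eq_zero fun a ha => by rw [hall a ha, sub_self, mul_zero]
        linarith
      exact absurd (hγA₁ bneg) (not_le.mpr hlt)
    -- the value is unchanged
    have hsums : ∀ b : β, ∑ a ∈ A₂, Cab a b * (μ a - g) = ∑ a ∈ A₁, Cab a b * (μ a - g) := by
      intro b
      rw [hA₂def, ← Finset.sum_filter_add_sum_filter_not A₁
        (fun a => μ a ≠ minGamma hB Cb Cab μ ν A₁) (fun a => Cab a b * (μ a - g))]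
      have : ∑ a ∈ A₁.filter (fun a => ¬ μ a ≠ minGamma hB Cb Cab μ ν A₁),
          Cab a b * (μ a - g) = 0 :=
        Finset.sum_eq_zero fun a ha => by
          have := not_not.mp (Finset.mem_filter.mp ha).2
          rw [this, hvA₁, sub_self, mul_zero]
      rw [this, add_zero]
    have hγA₂ : ∀ b : β, g ≤ γ b A₂ := by
      intro b
      rw [hge_iff g b A₂ hA₂ne, hsums b]
      exact (hge_iff g b A₁ hA₁).mp (hγA₁ b)
    refine ⟨hA₂ne, ?_⟩
    rw [hvA₁]
    exact le_antisymm (hminG_le A₂ hA₂ne) (Finset.le_inf' _ _ fun b _ => hγA₂ b)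
end
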